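/- arXiv:1701.06442 — 5 statements merged into one kernel-verified Lean document; each statement's English description precedes it below -/
import Mathlib

section
/- Given degree p, regularity r, and data (g₀, g₁) with g₀ a degree-p spline and g₁ any function, the function g^{(S)}(u,v) = g₀(v)(N^{p,r}_0(u) + N^{p,r}_1(u)) + (α^{(S)}(v)g₁(v) + β^{(S)}(v)g₀'(v))·(1/((k+1)p))·N^{p,r}_1(u) satisfies g^{(S)}(0,v) = g₀(v) and D_u g^{(S)}(0,v) = α^{(S)}(v)g₁(v) + β^{(S)}(v)g₀'(v) for all v ∈ [0,1]. -/
/-- The slopes `∓d` of `N₀, N₁` cancel in `N₀ + N₁`, so only the rescaled `N₁` term contributes. -/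
theorem hasDerivAt_mul_add_add_mul_one_div_mul {N₀ N₁ : ℝ → ℝ} {x d a c : ℝ} (hd : d ≠ 0)
    (h₀ : HasDerivAt N₀ (-d) x) (h₁ : HasDerivAt N₁ d x) :
    HasDerivAt (fun u => a * (N₀ u + N₁ u) + c * (1 / d) * N₁ u) c x := by
  refine (((h₀.add h₁).const_mul a).add (h₁.const_mul (c * (1 / d)))).congr_deriv ?_
  rw [neg_add_cancel, mul_zero, zero_add, mul_assoc, one_div_mul_cancel hd, mul_one]

theorem stmt7_general (p k : ℕ) (hp : 1 ≤ p)
    (N0 N1 : ℝ → ℝ)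
    (hN0diff : DifferentiableAt ℝ N0 0) (hN1diff : DifferentiableAt ℝ N1 0)
    (hN00 : N0 0 = 1) (hN10 : N1 0 = 0)
    (hN0' : deriv N0 0 = -((k + 1 : ℝ) * p)) (hN1' : deriv N1 0 = (k + 1 : ℝ) * p)
    (g₀ g₁ α β : ℝ → ℝ)
    (gS : ℝ → ℝ → ℝ)
    (hgS : ∀ u v : ℝ, gS u v =
      g₀ v * (N0 u + N1 u)
        + (α v * g₁ v + β v * deriv g₀ v) * (1 / ((k + 1 : ℝ) * p)) * N1 u) :
    ∀ v ∈ Set.Icc (0 : ℝ) 1,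
      gS 0 v = g₀ v ∧
      deriv (fun u => gS u v) 0 = α v * g₁ v + β v * deriv g₀ v := by
  intro v _
  have hd : (k + 1 : ℝ) * p ≠ 0 := by
    have : (0 : ℝ) < p := by exact_mod_cast hp
    positivity
  refine ⟨by simp [hgS, hN00, hN10], ?_⟩
  have h₀ : HasDerivAt N0 (-((k + 1 : ℝ) * p)) 0 := hN0' ▸ hN0diff.hasDerivAt
  have h₁ : HasDerivAt N1 ((k + 1 : ℝ) * p) 0 := hN1' ▸ hN1diff.hasDerivAt
  simp only [hgS]
  exact (hasDerivAt_mul_add_add_mul_one_div_mul hd h₀ h₁).deriv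

/-- Given data `(g₀, g₁)` with `g₀` a degree-`p` spline (differentiable along the
interface) and `g₁` any function, the function
`g^{(S)}(u,v) = g₀(v)(N₀(u) + N₁(u)) + (α^{(S)}(v)g₁(v) + β^{(S)}(v)g₀'(v))·N₁(u)/((k+1)p)`
satisfies `g^{(S)}(0,v) = g₀(v)` and `D_u g^{(S)}(0,v) = α^{(S)}(v)g₁(v) + β^{(S)}(v)g₀'(v)`
for all `v ∈ [0,1]`.  Here `N₀, N₁` are the first two B-splines of the open knot vector
`T^{p,r}_k` with uniform interior knots, characterized at `u = 0` by `N₀(0) = 1`,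
`N₁(0) = 0`, `N₀'(0) = −(k+1)p` and `N₁'(0) = (k+1)p`. -/
theorem stmt7 (p k : ℕ) (hp : 1 ≤ p)
    (N0 N1 : ℝ → ℝ)
    (hN0diff : DifferentiableAt ℝ N0 0) (hN1diff : DifferentiableAt ℝ N1 0)
    (hN00 : N0 0 = 1) (hN10 : N1 0 = 0)
    (hN0' : deriv N0 0 = -((k + 1 : ℝ) * p)) (hN1' : deriv N1 0 = (k + 1 : ℝ) * p)
    (g₀ g₁ α β : ℝ → ℝ) (hg₀ : Differentiable ℝ g₀)
    (gS : ℝ → ℝ → ℝ)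
    (hgS : ∀ u v : ℝ, gS u v =
      g₀ v * (N0 u + N1 u)
        + (α v * g₁ v + β v * deriv g₀ v) * (1 / ((k + 1 : ℝ) * p)) * N1 u) :
    ∀ v ∈ Set.Icc (0 : ℝ) 1,
      gS 0 v = g₀ v ∧
      deriv (fun u => gS u v) 0 = α v * g₁ v + β v * deriv g₀ v :=
  stmt7_general p k hp N0 N1 hN0diff hN1diff hN00 hN10 hN0' hN1' g₀ g₁ α β gS hgS
end

section
/- Under the AS G¹ assumptions, the space Γ₁ = {(0, g₁) ∈ V̂¹_Γ} of admissible transversal-derivative data with vanishing trace equals {0} × S(T^{p−d_α,r}_k,[0,1]), where d_α = max(deg α^{(L)}, deg α^{(R)}), and hence dim Γ₁ = p + k(p−r−1) + (1 − d_α)(k+1). -/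
open Polynomial

/-- The extended knot sequence: `kn 0 = 0`, `kn i = τ i` for `1 ≤ i ≤ k`, and `kn i = 1`
for `i > k`. -/
noncomputable def kn (k : ℕ) (τ : ℕ → ℝ) (i : ℕ) : ℝ :=
  if i = 0 then 0 else if i ≤ k then τ i else 1

/-- Valid interior knots: `0 < τ 1 < τ 2 < ⋯ < τ k < 1`. -/
def ValidKnots (k : ℕ) (τ : ℕ → ℝ) : Prop :=
  (∀ i, 1 ≤ i → i ≤ k → 0 < τ i ∧ τ i < 1) ∧
  (∀ i j, 1 ≤ i → i < j → j ≤ k → τ i < τ j)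

/-- `f : ℝ → ℝ` is a spline of degree `p` with `C^s` smoothness at the `k` interior knots
`τ 1 < ⋯ < τ k` of the open knot vector `T^{p,s}_k` on `[0,1]`:  on each piece
`[kn i, kn (i+1)]` it coincides with a polynomial `P i` of degree at most `p`, the first and
last pieces being extended polynomially beyond `0` and `1`, and at each interior knot the
derivatives of the adjacent polynomial pieces agree up to order `s`. -/
def SplinePred (p s k : ℕ) (τ : ℕ → ℝ) (f : ℝ → ℝ) : Prop :=
  ∃ P : ℕ → Polynomial ℝ,
    (∀ i, (P i).natDegree ≤ p) ∧
    (∀ i, i ≤ k → ∀ x ∈ Set.Icc (kn k τ i) (kn k τ (i + 1)), f x = (P i).eval x) ∧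
    (∀ x : ℝ, x ≤ 0 → f x = (P 0).eval x) ∧
    (∀ x : ℝ, 1 ≤ x → f x = (P k).eval x) ∧
    (∀ i, 1 ≤ i → i ≤ k → ∀ j, j ≤ s →
      (derivative^[j] (P (i - 1))).eval (τ i) = (derivative^[j] (P i)).eval (τ i))

/-- The spline space `S(T^{p,s}_k, [0,1])` as a subspace of `ℝ → ℝ`. -/
noncomputable def SplineSpace (p s k : ℕ) (τ : ℕ → ℝ) : Submodule ℝ (ℝ → ℝ) where
  carrier := {f | SplinePred p s k τ f}
  add_mem' := by
    rintro a b ⟨P, hPd, hPp, hPl, hPr, hPs⟩ ⟨Q, hQd, hQp, hQl, hQr, hQs⟩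
    refine ⟨fun i => P i + Q i, fun i => ?_, fun i hi x hx => ?_, fun x hx => ?_,
      fun x hx => ?_, fun i h1 h2 j hj => ?_⟩
    · exact le_trans (Polynomial.natDegree_add_le _ _) (max_le (hPd i) (hQd i))
    · simp [Pi.add_apply, hPp i hi x hx, hQp i hi x hx]
    · simp [Pi.add_apply, hPl x hx, hQl x hx]
    · simp [Pi.add_apply, hPr x hx, hQr x hx]
    · have hadd : ∀ (j : ℕ) (P Q : Polynomial ℝ),
          derivative^[j] (P + Q) = derivative^[j] P + derivative^[j] Q := by
        intro j
        induction j with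
        | zero => simp
        | succ n ih => intro P Q; simp [Function.iterate_succ_apply, derivative_add, ih]
      simp [hadd, hPs i h1 h2 j hj, hQs i h1 h2 j hj]
  zero_mem' :=
    ⟨fun _ => 0, by simp, by simp, by simp, by simp, by simp⟩
  smul_mem' := by
    rintro c a ⟨P, hPd, hPp, hPl, hPr, hPs⟩
    refine ⟨fun i => Polynomial.C c * P i, fun i => ?_, fun i hi x hx => ?_, fun x hx => ?_,
      fun x hx => ?_, fun i h1 h2 j hj => ?_⟩
    · exact le_trans (Polynomial.natDegree_C_mul_le _ _) (hPd i)
    · simp [Pi.smul_apply, smul_eq_mul, hPp i hi x hx]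
    · simp [Pi.smul_apply, smul_eq_mul, hPl x hx]
    · simp [Pi.smul_apply, smul_eq_mul, hPr x hx]
    · simp [Polynomial.iterate_derivative_C_mul, hPs i h1 h2 j hj]

/-!
A spline's polynomial pieces are unique on each knot interval, so `αL * g` and `αR * g` have
pieces `αL * P i` and `αR * P i`. Smoothness of order `r` at a knot `t` means that the jump
`D = P i - P (i - 1)` is divisible by `(X - t) ^ (r + 1)`. If this divides `αL * D` and `αR * D`,
it divides `D = u αL D + v αR D` (Bézout for the coprime pair); conversely, multiplying by a
polynomial of degree `≤ d_α` keeps a spline of degree `p - d_α` inside degree `p`. Hence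
`Γ₁ = S(T^{p-d_α,r}_k)`.

For the dimension, every spline of degree `p'` and smoothness `s` is uniquely
`P(x) + ∑ⱼ qⱼ(x) (x - τⱼ₊₁)₊^(s+1)` with `deg P ≤ p'` and `deg qⱼ < p' - s`, since the jumps are
exactly the multiples of `(X - τⱼ₊₁)^(s+1)` of degree `≤ p'`. This gives
`dim S(T^{p',s}_k) = p' + 1 + k (p' - s)`.
-/

open Set

section PolynomialFacts

theorem IsCoprime.dvd_of_dvd_mul_of_dvd_mul {R : Type*} [CommSemiring R] {a b c d : R}
    (hab : IsCoprime a b) (ha : c ∣ a * d) (hb : c ∣ b * d) : c ∣ d := by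
  obtain ⟨u, v, huv⟩ := hab
  have hd : d = u * (a * d) + v * (b * d) := by
    rw [← mul_assoc, ← mul_assoc, ← add_mul, huv, one_mul]
  rw [hd]
  exact dvd_add (ha.mul_left u) (hb.mul_left v)

theorem mem_degreeLT_succ_iff {R : Type*} [Semiring R] {f : R[X]} {n : ℕ} :
    f ∈ degreeLT R (n + 1) ↔ f.natDegree ≤ n := by
  rw [degreeLT_succ_eq_degreeLE, mem_degreeLE, natDegree_le_iff_degree_le]

variable {R : Type*} [CommRing R] [IsDomain R] [CharZero R]

theorem pow_X_sub_C_dvd_iff_forall_iterate_derivative_isRoot {D : R[X]} {t : R} {s : ℕ} :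
    (X - C t) ^ (s + 1) ∣ D ↔ ∀ j ≤ s, (derivative^[j] D).IsRoot t := by
  rcases eq_or_ne D 0 with rfl | hD
  · simp
  rw [← le_rootMultiplicity_iff hD, Nat.add_one_le_iff]
  exact lt_rootMultiplicity_iff_isRoot_iterate_derivative hD

theorem pow_X_sub_C_dvd_sub_iff {A B : R[X]} {t : R} {s : ℕ} :
    (X - C t) ^ (s + 1) ∣ B - A ↔
      ∀ j ≤ s, (derivative^[j] A).eval t = (derivative^[j] B).eval t := by
  simp only [pow_X_sub_C_dvd_iff_forall_iterate_derivative_isRoot, iterate_derivative_sub,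
    IsRoot.def, eval_sub, sub_eq_zero]
  exact forall₂_congr fun _ _ => eq_comm

theorem mem_degreeLT_sub_iff_natDegree_mul_le {q : R[X]} {t : R} {p s : ℕ} :
    q ∈ degreeLT R (p - s) ↔ (q * (X - C t) ^ (s + 1)).natDegree ≤ p := by
  rcases eq_or_ne q 0 with rfl | hq
  · simp
  rw [mem_degreeLT, ← natDegree_lt_iff_degree_lt hq,
    natDegree_mul hq (pow_ne_zero _ (X_sub_C_ne_zero t)), natDegree_pow, natDegree_X_sub_C]
  omega

theorem Polynomial.eq_of_eqOn_Icc {P Q : ℝ[X]} {a b : ℝ} (hab : a < b)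
    (h : EqOn (fun x => P.eval x) (fun x => Q.eval x) (Icc a b)) : P = Q :=
  eq_of_infinite_eval_eq P Q ((Icc_infinite hab).mono fun _ hx => h hx)

end PolynomialFacts

section Knots

variable {k : ℕ} {τ : ℕ → ℝ}

theorem kn_zero : kn k τ 0 = 0 := rfl

theorem kn_of_le {i : ℕ} (h1 : 1 ≤ i) (h2 : i ≤ k) : kn k τ i = τ i := by
  simp [kn, Nat.one_le_iff_ne_zero.mp h1, h2]

theorem kn_of_lt {i : ℕ} (h : k < i) : kn k τ i = 1 := by
  simp [kn, show i ≠ 0 by omega, show ¬i ≤ k by omega]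

theorem ValidKnots.le (hτ : ValidKnots k τ) {a b : ℕ} (ha : 1 ≤ a) (hab : a ≤ b) (hb : b ≤ k) :
    τ a ≤ τ b := by
  rcases hab.eq_or_lt with rfl | h
  · exact le_rfl
  · exact (hτ.2 a b ha h hb).le

theorem ValidKnots.kn_lt_kn_succ (hτ : ValidKnots k τ) {i : ℕ} (hi : i ≤ k) :
    kn k τ i < kn k τ (i + 1) := by
  rcases Nat.eq_zero_or_pos i with rfl | hpos
  · rcases Nat.eq_zero_or_pos k with rfl | hk
    · simp [kn_zero, kn_of_lt]
    · rw [kn_zero, kn_of_le le_rfl hk]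
      exact (hτ.1 1 le_rfl hk).1
  · rw [kn_of_le hpos hi]
    rcases hi.eq_or_lt with rfl | hik
    · rw [kn_of_lt (Nat.lt_succ_self i)]
      exact (hτ.1 i hpos le_rfl).2
    · rw [kn_of_le (by omega) hik]
      exact hτ.2 i (i + 1) hpos (Nat.lt_succ_self i) hik

theorem exists_mem_Icc_kn {x : ℝ} (h0 : 0 ≤ x) (h1 : x ≤ 1) :
    ∃ i ≤ k, x ∈ Icc (kn k τ i) (kn k τ (i + 1)) := by
  refine ⟨Nat.findGreatest (fun j => kn k τ j ≤ x) k, Nat.findGreatest_le k,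
    Nat.findGreatest_spec (P := fun j => kn k τ j ≤ x) (Nat.zero_le k) (by rwa [kn_zero]), ?_⟩
  rcases (Nat.findGreatest_le (P := fun j => kn k τ j ≤ x) k).eq_or_lt with heq | hlt
  · rwa [heq, kn_of_lt (Nat.lt_succ_self k)]
  · exact (not_le.mp (Nat.findGreatest_is_greatest (P := fun j => kn k τ j ≤ x)
      (Nat.lt_succ_self _) hlt)).le

theorem funext_of_eqOn_Icc_kn {f g : ℝ → ℝ}
    (hpieces : ∀ i ≤ k, EqOn f g (Icc (kn k τ i) (kn k τ (i + 1))))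
    (hleft : ∀ x ≤ 0, f x = g x) (hright : ∀ x, 1 ≤ x → f x = g x) : f = g := by
  funext x
  rcases le_or_gt x 0 with hx0 | hx0
  · exact hleft x hx0
  rcases le_or_gt 1 x with hx1 | hx1
  · exact hright x hx1
  obtain ⟨i, hik, hx⟩ := exists_mem_Icc_kn (k := k) (τ := τ) hx0.le hx1.le
  exact hpieces i hik hx

end Knots

namespace SplinePred

variable {p p' s s' k : ℕ} {τ : ℕ → ℝ} {f : ℝ → ℝ}

theorem mono (hs : s' ≤ s) (hf : SplinePred p s k τ f) : SplinePred p s' k τ f := by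
  obtain ⟨P, hdeg, hpiece, hleft, hright, hsmooth⟩ := hf
  exact ⟨P, hdeg, hpiece, hleft, hright, fun i h1 h2 j hj => hsmooth i h1 h2 j (hj.trans hs)⟩

theorem polynomial_mul (α : ℝ[X]) (hdeg : α.natDegree + p' ≤ p) (hf : SplinePred p' s k τ f) :
    SplinePred p s k τ (fun x => α.eval x * f x) := by
  obtain ⟨P, hPdeg, hpiece, hleft, hright, hsmooth⟩ := hf
  refine ⟨fun i => α * P i,
    fun i => natDegree_mul_le.trans ((Nat.add_le_add_left (hPdeg i) _).trans hdeg),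
    fun i hi x hx => by rw [eval_mul, ← hpiece i hi x hx],
    fun x hx => by rw [eval_mul, ← hleft x hx], fun x hx => by rw [eval_mul, ← hright x hx],
    fun i h1 h2 => pow_X_sub_C_dvd_sub_iff.mp ?_⟩
  rw [← mul_sub]
  exact (pow_X_sub_C_dvd_sub_iff.mpr (hsmooth i h1 h2)).mul_left α

theorem pow_X_sub_C_dvd_sub (hτ : ValidKnots k τ) (hf : SplinePred p s k τ f) {Q : ℕ → ℝ[X]}
    (hQ : ∀ i ≤ k, EqOn f (fun x => (Q i).eval x) (Icc (kn k τ i) (kn k τ (i + 1))))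
    {i : ℕ} (h1 : 1 ≤ i) (h2 : i ≤ k) : (X - C (τ i)) ^ (s + 1) ∣ Q i - Q (i - 1) := by
  obtain ⟨P, -, hpiece, -, -, hsmooth⟩ := hf
  have hPQ : ∀ j ≤ k, P j = Q j := fun j hj =>
    eq_of_eqOn_Icc (hτ.kn_lt_kn_succ hj) fun x hx => (hpiece j hj x hx).symm.trans (hQ j hj hx)
  rw [← hPQ i h2, ← hPQ (i - 1) (by omega)]
  exact pow_X_sub_C_dvd_sub_iff.mpr (hsmooth i h1 h2)

theorem of_isCoprime_mul (hτ : ValidKnots k τ) {αL αR : ℝ[X]} (hcop : IsCoprime αL αR)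
    (hf : SplinePred p' s' k τ f) (hL : SplinePred p s k τ (fun x => αL.eval x * f x))
    (hR : SplinePred p s k τ (fun x => αR.eval x * f x)) : SplinePred p' s k τ f := by
  obtain ⟨P, hdeg, hpiece, hleft, hright, -⟩ := hf
  have hjump : ∀ α : ℝ[X], SplinePred p s k τ (fun x => α.eval x * f x) →
      ∀ i, 1 ≤ i → i ≤ k → (X - C (τ i)) ^ (s + 1) ∣ α * (P i - P (i - 1)) := by
    intro α hα i h1 h2
    rw [mul_sub]
    exact hα.pow_X_sub_C_dvd_sub hτ (Q := fun i => α * P i)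
      (fun j hj x hx => by simp only [eval_mul, hpiece j hj x hx]) h1 h2
  exact ⟨P, hdeg, hpiece, hleft, hright, fun i h1 h2 => pow_X_sub_C_dvd_sub_iff.mp
    (hcop.dvd_of_dvd_mul_of_dvd_mul (hjump αL hL i h1 h2) (hjump αR hR i h1 h2))⟩

end SplinePred

noncomputable def truncPowPiece (s k : ℕ) (τ : ℕ → ℝ) (P : ℝ[X]) (q : Fin k → ℝ[X]) (i : ℕ) :
    ℝ[X] :=
  P + ∑ j : Fin k, if (j : ℕ) < i then q j * (X - C (τ (j + 1))) ^ (s + 1) else 0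

noncomputable def truncPowSpline (s k : ℕ) (τ : ℕ → ℝ) (P : ℝ[X]) (q : Fin k → ℝ[X]) (x : ℝ) :
    ℝ :=
  P.eval x + ∑ j : Fin k, (q j).eval x * if τ (j + 1) ≤ x then (x - τ (j + 1)) ^ (s + 1) else 0

section TruncatedPowers

variable {p s k : ℕ} {τ : ℕ → ℝ} {P : ℝ[X]} {q : Fin k → ℝ[X]}

theorem truncPowPiece_zero : truncPowPiece s k τ P q 0 = P := by
  simp [truncPowPiece]

theorem truncPowPiece_succ {i : ℕ} (hi : i < k) :
    truncPowPiece s k τ P q (i + 1) =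
      truncPowPiece s k τ P q i + q ⟨i, hi⟩ * (X - C (τ (i + 1))) ^ (s + 1) := by
  simp only [truncPowPiece, add_assoc]
  congr 1
  have hlast : q ⟨i, hi⟩ * (X - C (τ (i + 1))) ^ (s + 1) =
      ∑ j : Fin k, if j = ⟨i, hi⟩ then q j * (X - C (τ (j + 1))) ^ (s + 1) else 0 := by
    simp
  rw [hlast, ← Finset.sum_add_distrib]
  refine Finset.sum_congr rfl fun j _ => ?_
  rcases lt_trichotomy (j : ℕ) i with h | h | h
  · simp [h, Nat.lt_succ_of_lt h, Fin.ext_iff, h.ne]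
  · simp [h, Fin.ext_iff]
  · simp [h.not_gt, show ¬(j : ℕ) < i + 1 by omega, Fin.ext_iff, h.ne']

theorem eval_truncPowPiece (i : ℕ) (x : ℝ) :
    (truncPowPiece s k τ P q i).eval x =
      P.eval x +
        ∑ j : Fin k, if (j : ℕ) < i then (q j).eval x * (x - τ (j + 1)) ^ (s + 1) else 0 := by
  simp [truncPowPiece, eval_finsetSum, apply_ite]

theorem truncPowSpline_eq_eval_truncPowPiece {i : ℕ} {x : ℝ}
    (hlo : ∀ j : Fin k, (j : ℕ) < i → τ (j + 1) ≤ x) (hhi : ∀ j : Fin k, i ≤ j → x ≤ τ (j + 1)) :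
    truncPowSpline s k τ P q x = (truncPowPiece s k τ P q i).eval x := by
  rw [eval_truncPowPiece, truncPowSpline]
  congr 1
  refine Finset.sum_congr rfl fun j _ => ?_
  by_cases hj : (j : ℕ) < i
  · simp [hj, hlo j hj]
  · rcases (hhi j (not_lt.mp hj)).eq_or_lt with h | h
    · simp [hj, h]
    · simp [hj, not_le.mpr h]

theorem truncPowSpline_eqOn_Icc_kn (hτ : ValidKnots k τ) {i : ℕ} (hi : i ≤ k) :
    EqOn (truncPowSpline s k τ P q) (fun x => (truncPowPiece s k τ P q i).eval x)
      (Icc (kn k τ i) (kn k τ (i + 1))) := fun x hx =>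
  truncPowSpline_eq_eval_truncPowPiece
    (fun j hj => (hτ.le (by omega) hj hi).trans ((kn_of_le (by omega) hi).symm.trans_le hx.1))
    (fun j hj => (hx.2.trans_eq (kn_of_le (by omega) (by omega))).trans
      (hτ.le (by omega) (by omega) (by omega)))

theorem truncPowSpline_of_nonpos (hτ : ValidKnots k τ) {x : ℝ} (hx : x ≤ 0) :
    truncPowSpline s k τ P q x = P.eval x := by
  rw [truncPowSpline_eq_eval_truncPowPiece (i := 0) (fun j hj => absurd hj (Nat.not_lt_zero _))
    (fun j _ => hx.trans (hτ.1 (j + 1) (by omega) j.2).1.le), truncPowPiece_zero]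

theorem truncPowSpline_of_one_le (hτ : ValidKnots k τ) {x : ℝ} (hx : 1 ≤ x) :
    truncPowSpline s k τ P q x = (truncPowPiece s k τ P q k).eval x :=
  truncPowSpline_eq_eval_truncPowPiece (fun j _ => (hτ.1 (j + 1) (by omega) j.2).2.le.trans hx)
    (fun j hj => absurd j.2 (not_lt.mpr hj))

theorem natDegree_truncPowPiece_le (hP : P.natDegree ≤ p) (hq : ∀ j, q j ∈ degreeLT ℝ (p - s))
    (i : ℕ) : (truncPowPiece s k τ P q i).natDegree ≤ p := by
  refine (natDegree_add_le _ _).trans (max_le hP (natDegree_sum_le_of_forall_le _ _ fun j _ => ?_))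
  split_ifs
  · exact mem_degreeLT_sub_iff_natDegree_mul_le.mp (hq j)
  · simp

theorem splinePred_truncPowSpline (hτ : ValidKnots k τ) (hP : P.natDegree ≤ p)
    (hq : ∀ j, q j ∈ degreeLT ℝ (p - s)) : SplinePred p s k τ (truncPowSpline s k τ P q) := by
  refine ⟨truncPowPiece s k τ P q, natDegree_truncPowPiece_le hP hq,
    fun i hi => truncPowSpline_eqOn_Icc_kn hτ hi,
    fun x hx => by rw [truncPowSpline_of_nonpos hτ hx, truncPowPiece_zero],
    fun x hx => truncPowSpline_of_one_le hτ hx, fun i h1 h2 => pow_X_sub_C_dvd_sub_iff.mp ?_⟩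
  obtain ⟨j, rfl⟩ : ∃ j, i = j + 1 := ⟨i - 1, by omega⟩
  rw [Nat.add_sub_cancel, truncPowPiece_succ (by omega), add_sub_cancel_left]
  exact dvd_mul_left _ _

theorem truncPowSpline_eq_zero (hτ : ValidKnots k τ) (h : truncPowSpline s k τ P q = 0) :
    P = 0 ∧ q = 0 := by
  have hpiece : ∀ i ≤ k, truncPowPiece s k τ P q i = 0 := fun i hi =>
    eq_of_eqOn_Icc (hτ.kn_lt_kn_succ hi) fun x hx => by
      simpa [h] using (truncPowSpline_eqOn_Icc_kn (s := s) (P := P) (q := q) hτ hi hx).symm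
  refine ⟨truncPowPiece_zero.symm.trans (hpiece 0 (Nat.zero_le k)), funext fun j => ?_⟩
  have hsucc := truncPowPiece_succ (s := s) (τ := τ) (P := P) (q := q) j.2
  rw [hpiece _ j.2, hpiece _ j.2.le, zero_add, eq_comm, mul_eq_zero] at hsucc
  exact hsucc.resolve_right (pow_ne_zero _ (X_sub_C_ne_zero _))

theorem SplinePred.exists_eq_truncPowSpline (hτ : ValidKnots k τ) {f : ℝ → ℝ}
    (hf : SplinePred p s k τ f) :
    ∃ (P : ℝ[X]) (q : Fin k → ℝ[X]), P.natDegree ≤ p ∧ (∀ j, q j ∈ degreeLT ℝ (p - s)) ∧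
      truncPowSpline s k τ P q = f := by
  obtain ⟨Q, hdeg, hpiece, hleft, hright, hsmooth⟩ := hf
  have hjump (j : Fin k) : ∃ c : ℝ[X], Q (j + 1) - Q j = c * (X - C (τ (j + 1))) ^ (s + 1) := by
    have hdvd := pow_X_sub_C_dvd_sub_iff.mpr (hsmooth (j + 1) (by omega) j.2)
    rw [Nat.add_sub_cancel] at hdvd
    obtain ⟨c, hc⟩ := hdvd
    exact ⟨c, hc.trans (mul_comm _ _)⟩
  choose c hc using hjump
  have hpieces : ∀ i ≤ k, truncPowPiece s k τ (Q 0) c i = Q i := by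
    intro i hi
    induction i with
    | zero => exact truncPowPiece_zero
    | succ i ih =>
      rw [truncPowPiece_succ hi, ih (by omega), ← hc ⟨i, hi⟩, add_sub_cancel]
  refine ⟨Q 0, c, hdeg 0,
    fun j => (mem_degreeLT_sub_iff_natDegree_mul_le (t := τ (j + 1))).mpr ?_,
    funext_of_eqOn_Icc_kn (k := k) (τ := τ) (fun i hi x hx => ?_) (fun x hx => ?_)
      (fun x hx => ?_)⟩
  · rw [← hc j]
    exact (natDegree_sub_le _ _).trans (max_le (hdeg _) (hdeg _))
  · rw [truncPowSpline_eqOn_Icc_kn hτ hi hx, hpieces i hi, hpiece i hi x hx]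
  · rw [truncPowSpline_of_nonpos hτ hx, hleft x hx]
  · rw [truncPowSpline_of_one_le hτ hx, hpieces k le_rfl, hright x hx]

end TruncatedPowers

noncomputable def truncPowSplineMap (p s k : ℕ) (τ : ℕ → ℝ) :
    degreeLT ℝ (p + 1) × (Fin k → degreeLT ℝ (p - s)) →ₗ[ℝ] ℝ → ℝ where
  toFun Pq := truncPowSpline s k τ Pq.1 fun j => Pq.2 j
  map_add' _ _ := by
    ext x
    simp only [truncPowSpline, Prod.fst_add, Prod.snd_add, Submodule.coe_add, Pi.add_apply,
      eval_add, add_mul, Finset.sum_add_distrib]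
    ring
  map_smul' _ _ := by
    ext x
    simp [truncPowSpline, Finset.mul_sum, mul_add, mul_assoc]

section SplineDimension

variable {k : ℕ} {τ : ℕ → ℝ}

theorem range_truncPowSplineMap (hτ : ValidKnots k τ) (p s : ℕ) :
    LinearMap.range (truncPowSplineMap p s k τ) = SplineSpace p s k τ := by
  ext f
  constructor
  · rintro ⟨⟨P, q⟩, rfl⟩
    exact splinePred_truncPowSpline hτ (mem_degreeLT_succ_iff.mp P.2) fun j => (q j).2
  · intro hf
    obtain ⟨P, q, hP, hq, rfl⟩ := SplinePred.exists_eq_truncPowSpline hτ hf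
    exact ⟨(⟨P, mem_degreeLT_succ_iff.mpr hP⟩, fun j => ⟨q j, hq j⟩), rfl⟩

theorem truncPowSplineMap_injective (hτ : ValidKnots k τ) (p s : ℕ) :
    Function.Injective (truncPowSplineMap p s k τ) := by
  rw [← LinearMap.ker_eq_bot, LinearMap.ker_eq_bot']
  rintro ⟨P, q⟩ h
  obtain ⟨hP, hq⟩ := truncPowSpline_eq_zero hτ h
  ext1
  · exact Subtype.ext hP
  · exact funext fun j => Subtype.ext (congrFun hq j)

theorem finrank_splineSpace (hτ : ValidKnots k τ) (p s : ℕ) :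
    Module.finrank ℝ (SplineSpace p s k τ) = p + 1 + k * (p - s) := by
  rw [← range_truncPowSplineMap hτ, LinearMap.finrank_range_of_inj
    (truncPowSplineMap_injective hτ p s), Module.finrank_prod, Module.finrank_pi_fintype]
  simp [Module.finrank_eq_card_basis (degreeLT.basis ℝ _)]

end SplineDimension

theorem stmt9_general (p r k : ℕ) (τ : ℕ → ℝ) (hτ : ValidKnots k τ)
    (hrp : r + 1 < p)
    (αL αR : Polynomial ℝ)
    (hαL : αL.natDegree ≤ 1) (hαR : αR.natDegree ≤ 1)
    (hcop : IsCoprime αL αR) :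
    {g₁ : ℝ → ℝ |
        SplinePred (p - max αL.natDegree αR.natDegree) (r - 1) k τ g₁ ∧
        SplinePred p r k τ (fun v => αL.eval v * g₁ v) ∧
        SplinePred p r k τ (fun v => αR.eval v * g₁ v)}
      = (SplineSpace (p - max αL.natDegree αR.natDegree) r k τ : Set (ℝ → ℝ)) ∧
    Module.finrank ℝ (SplineSpace (p - max αL.natDegree αR.natDegree) r k τ)
      = p + k * (p - r - 1) + (1 - max αL.natDegree αR.natDegree) * (k + 1) := by
  have hL := le_max_left αL.natDegree αR.natDegree
  have hR := le_max_right αL.natDegree αR.natDegree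
  set d := max αL.natDegree αR.natDegree
  have hd : d ≤ 1 := max_le hαL hαR
  refine ⟨Set.ext fun g => ⟨fun ⟨h0, hgL, hgR⟩ => h0.of_isCoprime_mul hτ hcop hgL hgR,
    fun hg => ⟨hg.mono (Nat.sub_le r 1), hg.polynomial_mul αL (by omega),
      hg.polynomial_mul αR (by omega)⟩⟩, ?_⟩
  rw [finrank_splineSpace hτ, show p - d - r = (p - r - 1) + (1 - d) by omega,
    show p - d + 1 = p + (1 - d) by omega]
  ring

/-- Under the AS G¹ assumptions, the space `Γ₁` of admissible transversal-derivative data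
with vanishing trace, i.e. the set of `g₁` such that `(0, g₁) ∈ V̂¹_Γ` (characterized by
`g₁ ∈ S(T^{p−d_α,r−1}_k)` and `α^{(S)}·g₁ ∈ S(T^{p,r}_k)` for `S ∈ {L,R}`), equals the spline
space `S(T^{p−d_α,r}_k, [0,1])`, where `d_α = max(deg αL, deg αR)`; hence its dimension is
`p + k(p−r−1) + (1 − d_α)(k+1)`. -/
theorem stmt9 (p r k : ℕ) (τ : ℕ → ℝ) (hτ : ValidKnots k τ)
    (hp : 3 ≤ p) (hr1 : 1 ≤ r) (hrp : r + 1 < p)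
    (αL αR : Polynomial ℝ)
    (hαL : αL.natDegree ≤ 1) (hαR : αR.natDegree ≤ 1)
    (hcop : IsCoprime αL αR) :
    {g₁ : ℝ → ℝ |
        SplinePred (p - max αL.natDegree αR.natDegree) (r - 1) k τ g₁ ∧
        SplinePred p r k τ (fun v => αL.eval v * g₁ v) ∧
        SplinePred p r k τ (fun v => αR.eval v * g₁ v)}
      = (SplineSpace (p - max αL.natDegree αR.natDegree) r k τ : Set (ℝ → ℝ)) ∧
    Module.finrank ℝ (SplineSpace (p - max αL.natDegree αR.natDegree) r k τ)
      = p + k * (p - r - 1) + (1 - max αL.natDegree αR.natDegree) * (k + 1) :=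
  stmt9_general p r k τ hτ hrp αL αR hαL hαR hcop
end

section
/- The blossom of a polynomial of degree p is unique: if H₁, H₂ : ℝ^p → ℝ are both symmetric, multi-affine (affine in each argument), and satisfy H₁(t,…,t) = H₂(t,…,t) for all t ∈ ℝ, then H₁ = H₂. -/
/-- `H` is symmetric: invariant under permutations of its arguments. -/
def IsSymmFn {p : ℕ} (H : (Fin p → ℝ) → ℝ) : Prop :=
  ∀ (σ : Equiv.Perm (Fin p)) (x : Fin p → ℝ), H (x ∘ σ) = H x

/-- `H` is multi-affine: affine in each argument separately. -/
def IsMultiAffine {p : ℕ} (H : (Fin p → ℝ) → ℝ) : Prop :=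
  ∀ (i : Fin p) (x : Fin p → ℝ), ∃ a b : ℝ, ∀ t : ℝ,
    H (Function.update x i t) = a * t + b

namespace Blossom

variable {p : ℕ}

lemma affine_interp {D : (Fin p → ℝ) → ℝ} (h : IsMultiAffine D) (i : Fin p)
    (x : Fin p → ℝ) (t : ℝ) :
    D (Function.update x i t) =
      (1 - t) * D (Function.update x i 0) + t * D (Function.update x i 1) := by
  obtain ⟨a, b, hab⟩ := h i x
  rw [hab, hab, hab]; ring

/-- vertex function -/
def vtx (S T : Finset (Fin p)) (x : Fin p → ℝ) : Fin p → ℝ :=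
  fun i => if i ∈ S then 1 else if i ∈ T then 0 else x i

lemma expansion {D : (Fin p → ℝ) → ℝ} (h : IsMultiAffine D) (T : Finset (Fin p))
    (x : Fin p → ℝ) :
    D x = ∑ S ∈ T.powerset,
      (∏ i ∈ S, x i) * (∏ i ∈ T \ S, (1 - x i)) * D (vtx S T x) := by
  induction T using Finset.induction_on with
  | empty =>
    have hv : vtx (∅ : Finset (Fin p)) ∅ x = x := by funext i; simp [vtx]
    simp [hv]
  | insert j T' hj IH =>
    rw [Finset.sum_powerset_insert hj, ← Finset.sum_add_distrib, IH]
    refine Finset.sum_congr rfl fun S hS => ?_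
    have hST : S ⊆ T' := Finset.mem_powerset.1 hS
    have hjS : j ∉ S := fun hc => hj (hST hc)
    have h1 : (insert j T') \ S = insert j (T' \ S) := by
      rw [Finset.insert_sdiff_of_notMem _ hjS]
    have hjTS : j ∉ T' \ S := fun hc => hj (Finset.mem_sdiff.1 hc).1
    have h2 : (insert j T') \ (insert j S) = T' \ S := by
      ext i
      simp only [Finset.mem_sdiff, Finset.mem_insert]
      constructor
      · rintro ⟨hi | hi, hni⟩
        · exact absurd (Or.inl hi) hni
        · exact ⟨hi, fun hc => hni (Or.inr hc)⟩
      · rintro ⟨hi, hni⟩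
        exact ⟨Or.inr hi, fun hc => hc.elim (fun e => hj (e ▸ hi)) hni⟩
    have h3 : vtx S (insert j T') x = Function.update (vtx S T' x) j 0 := by
      funext i
      by_cases hij : i = j
      · subst hij; simp [vtx, hjS]
      · simp [vtx, Function.update, hij]
    have h4 : vtx (insert j S) (insert j T') x = Function.update (vtx S T' x) j 1 := by
      funext i
      by_cases hij : i = j
      · subst hij; simp [vtx, Function.update]
      · simp [vtx, Function.update, hij]
    have h5 : vtx S T' x = Function.update (vtx S T' x) j (x j) := by
      funext i
      by_cases hij : i = j
      · subst hij; simp [vtx, hjS, hj, Function.update]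
      · simp [Function.update, hij]
    have h6 := affine_interp h j (vtx S T' x) (x j)
    rw [← h5] at h6
    rw [h1, h2, h3, h4, Finset.prod_insert hjTS, Finset.prod_insert hjS, h6]
    ring

end Blossom

lemma vertex_card_eq {D : (Fin p → ℝ) → ℝ} (hs : IsSymmFn D) {S T : Finset (Fin p)}
    (h : S.card = T.card) :
    D (fun i => if i ∈ S then (1:ℝ) else 0) = D (fun i => if i ∈ T then (1:ℝ) else 0) := by
  have e : {x // x ∈ T} ≃ {x // x ∈ S} := Finset.equivOfCardEq h.symm
  have hc : Tᶜ.card = Sᶜ.card := by simp [Finset.card_compl, h]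
  have f0 : {x // x ∈ Tᶜ} ≃ {x // x ∈ Sᶜ} := Finset.equivOfCardEq hc
  have f : {x // ¬ x ∈ T} ≃ {x // ¬ x ∈ S} :=
    (Equiv.subtypeEquivRight (fun x => (Finset.mem_compl).symm)).trans
      (f0.trans (Equiv.subtypeEquivRight (fun x => Finset.mem_compl)))
  set σ : Equiv.Perm (Fin p) := Equiv.subtypeCongr e f with hσ
  have key : ((fun i => if i ∈ S then (1:ℝ) else 0) ∘ σ) = fun i => if i ∈ T then (1:ℝ) else 0 := by
    funext i
    by_cases hi : i ∈ T
    · have h1 : σ i = (e ⟨i, hi⟩ : Fin p) := by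
        simp [hσ, Equiv.subtypeCongr, hi]
      have h2 : (σ i) ∈ S := h1 ▸ (e ⟨i, hi⟩).2
      simp [Function.comp, h2, hi]
    · have h1 : σ i = (f ⟨i, hi⟩ : Fin p) := by
        simp [hσ, Equiv.subtypeCongr, hi]
      have h2 : ¬ (σ i) ∈ S := h1 ▸ (f ⟨i, hi⟩).2
      simp [Function.comp, h2, hi]
  calc D (fun i => if i ∈ S then (1:ℝ) else 0)
      = D ((fun i => if i ∈ S then (1:ℝ) else 0) ∘ σ) := (hs σ _).symm
    _ = D (fun i => if i ∈ T then (1:ℝ) else 0) := by rw [key]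

open Polynomial in
lemma bernstein_indep (d : ℕ → ℝ)
    (h : ∀ t : ℝ, ∑ k ∈ Finset.range (p+1), d k * t^k * (1-t)^(p-k) = 0) :
    ∀ k, k ≤ p → d k = 0 := by
  set Q : ℝ[X] := ∑ k ∈ Finset.range (p+1), Polynomial.C (d k) * Polynomial.X ^ k with hQ
  have heval : ∀ s : ℝ, s ≠ -1 → Q.eval s = 0 := by
    intro s hs
    have h1 : (1 : ℝ) + s ≠ 0 := by
      intro hc; apply hs; linarith
    have key : ∀ k ∈ Finset.range (p+1),
        d k * s^k = (d k * (s/(1+s))^k * (1 - s/(1+s))^(p-k)) * (1+s)^p := by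
      intro k hk
      have hkp : k ≤ p := Nat.lt_succ_iff.1 (Finset.mem_range.1 hk)
      have ht : 1 - s/(1+s) = 1/(1+s) := by field_simp; ring
      rw [ht]
      have hp : (1+s)^p = (1+s)^k * (1+s)^(p-k) := by
        rw [← pow_add, Nat.add_sub_cancel' hkp]
      rw [hp, div_pow, div_pow, one_pow]
      field_simp
    have : Q.eval s = ∑ k ∈ Finset.range (p+1), d k * s^k := by
      simp [hQ, Polynomial.eval_finset_sum]
    rw [this, Finset.sum_congr rfl key, ← Finset.sum_mul, h (s/(1+s)), zero_mul]
  have hQ0 : Q = 0 := by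
    apply Polynomial.eq_zero_of_infinite_isRoot
    apply Set.Infinite.mono (s := {(-1 : ℝ)}ᶜ)
    · intro x hx; exact heval x hx
    · exact (Set.finite_singleton (-1)).infinite_compl
  intro k hk
  have : Q.coeff k = d k := by
    rw [hQ, Polynomial.finset_sum_coeff]
    rw [Finset.sum_eq_single k]
    · simp
    · intro b _ hb
      simp [Polynomial.coeff_C_mul, Polynomial.coeff_X_pow, (Ne.symm hb)]
    · intro hc; exact absurd (Finset.mem_range.2 (Nat.lt_succ_of_le hk)) hc
  rw [← this, hQ0]; simp




/-- Uniqueness of the blossom: two symmetric multi-affine functions `ℝ^p → ℝ` with the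
same diagonal coincide. -/
theorem stmt12 {p : ℕ} (H₁ H₂ : (Fin p → ℝ) → ℝ)
    (hs₁ : IsSymmFn H₁) (hma₁ : IsMultiAffine H₁)
    (hs₂ : IsSymmFn H₂) (hma₂ : IsMultiAffine H₂)
    (hdiag : ∀ t : ℝ, H₁ (fun _ => t) = H₂ (fun _ => t)) :
    H₁ = H₂ := by
  classical
  set D : (Fin p → ℝ) → ℝ := fun x => H₁ x - H₂ x with hD
  have hmaD : IsMultiAffine D := by
    intro i x
    obtain ⟨a1, b1, h1⟩ := hma₁ i x
    obtain ⟨a2, b2, h2⟩ := hma₂ i x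
    refine ⟨a1 - a2, b1 - b2, fun t => ?_⟩
    simp only [hD, h1, h2]; ring
  have hsD : IsSymmFn D := fun σ x => by simp only [hD, hs₁ σ x, hs₂ σ x]
  set V : Finset (Fin p) → ℝ := fun S => D (fun i => if i ∈ S then (1:ℝ) else 0) with hV
  set d : ℕ → ℝ :=
    fun k => ∑ S ∈ Finset.powersetCard k (Finset.univ : Finset (Fin p)), V S with hd
  have hvtx : ∀ (S : Finset (Fin p)) (x : Fin p → ℝ),
      Blossom.vtx S Finset.univ x = fun i => if i ∈ S then (1:ℝ) else 0 := by
    intro S x; funext i; simp [Blossom.vtx]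
  have hcardu : (Finset.univ : Finset (Fin p)).card = p := Finset.card_fin p
  have hdiag0 : ∀ t : ℝ, ∑ k ∈ Finset.range (p+1), d k * t^k * (1-t)^(p-k) = 0 := by
    intro t
    have hexp := Blossom.expansion hmaD Finset.univ (fun _ => t)
    have hz : D (fun _ : Fin p => t) = 0 := by simp [hD, hdiag t]
    rw [hz] at hexp
    have hterm : ∀ S ∈ (Finset.univ : Finset (Fin p)).powerset,
        ((∏ _i ∈ S, t) * ∏ _i ∈ Finset.univ \ S, (1 - t)) *
          D (Blossom.vtx S Finset.univ fun _ => t)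
          = V S * t ^ S.card * (1-t)^(p - S.card) := by
      intro S _
      rw [Finset.prod_const, Finset.prod_const, hvtx S,
        Finset.card_sdiff_of_subset (Finset.subset_univ S), hcardu]
      simp only [hV]; ring
    rw [Finset.sum_congr rfl hterm, Finset.sum_powerset, hcardu] at hexp
    have hinner : ∀ k ∈ Finset.range (p+1),
        (∑ S ∈ Finset.powersetCard k (Finset.univ : Finset (Fin p)),
          V S * t ^ S.card * (1-t)^(p - S.card)) = d k * t^k * (1-t)^(p-k) := by
      intro k _
      rw [hd, Finset.sum_mul, Finset.sum_mul]
      refine Finset.sum_congr rfl fun S hS => ?_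
      rw [(Finset.mem_powersetCard.1 hS).2]
    rw [Finset.sum_congr rfl hinner] at hexp
    exact hexp.symm
  have hd0 := bernstein_indep d hdiag0
  have hV0 : ∀ S : Finset (Fin p), V S = 0 := by
    intro S
    have hcard : S.card ≤ p := by
      simpa using Finset.card_le_univ S
    have hsum : d S.card =
        ((Finset.powersetCard S.card (Finset.univ : Finset (Fin p))).card : ℝ) * V S := by
      show (∑ T ∈ Finset.powersetCard S.card (Finset.univ : Finset (Fin p)), V T) = _
      rw [Finset.sum_congr rfl (fun T hT =>
        show V T = V S from
          vertex_card_eq hsD ((Finset.mem_powersetCard.1 hT).2 : T.card = S.card)),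
        Finset.sum_const, nsmul_eq_mul]
    rw [hd0 S.card hcard] at hsum
    have hpos : 0 < (Finset.powersetCard S.card (Finset.univ : Finset (Fin p))).card := by
      rw [Finset.card_powersetCard, hcardu]
      exact Nat.choose_pos hcard
    have hne : ((Finset.powersetCard S.card (Finset.univ : Finset (Fin p))).card : ℝ) ≠ 0 :=
      Nat.cast_ne_zero.mpr hpos.ne'
    exact (mul_eq_zero.1 hsum.symm).resolve_left hne
  have hDzero : ∀ x, D x = 0 := by
    intro x
    rw [Blossom.expansion hmaD Finset.univ x]
    refine Finset.sum_eq_zero fun S _ => ?_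
    rw [hvtx S,
      show (D fun i => if i ∈ S then (1:ℝ) else 0) = 0 from hV0 S, mul_zero]
  funext x
  have := hDzero x
  simp only [hD] at this
  linarith
end

section
/- Derivative via blossoms (polynomial case): if h is a polynomial of degree ≤ p with blossom H, then h'(t) = p·(H(t,…,t,1) − H(t,…,t,0))/(1−0), and more generally for any a ≠ b, h'(t) = p·(H(t,…,t,b) − H(t,…,t,a))/(b−a), where t appears p−1 times. -/
open Polynomial

/-- A multi-affine function composed with an affine path is a polynomial function. -/
lemma polyOfMultiAffine : ∀ (m : ℕ) (F : (Fin m → ℝ) → ℝ), IsMultiAffine F →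
    ∀ (a b : Fin m → ℝ), ∃ f : Polynomial ℝ, ∀ u : ℝ,
      F (fun i => a i * u + b i) = f.eval u := by
  intro m
  induction m with
  | zero =>
    intro F _ a b
    refine ⟨Polynomial.C (F (fun i => i.elim0)), fun u => ?_⟩
    rw [Polynomial.eval_C]
    congr 1
    funext i
    exact i.elim0
  | succ m ih =>
    intro F hF a b
    have h0 : IsMultiAffine (fun x : Fin m → ℝ => F (Fin.snoc x 0)) := by
      intro i x
      obtain ⟨A, B, hAB⟩ := hF i.castSucc (Fin.snoc x (0:ℝ))
      refine ⟨A, B, fun t => ?_⟩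
      show F (Fin.snoc (Function.update x i t) 0) = A * t + B
      rw [Fin.snoc_update]; exact hAB t
    have h1 : IsMultiAffine (fun x : Fin m → ℝ => F (Fin.snoc x 1)) := by
      intro i x
      obtain ⟨A, B, hAB⟩ := hF i.castSucc (Fin.snoc x (1:ℝ))
      refine ⟨A, B, fun t => ?_⟩
      show F (Fin.snoc (Function.update x i t) 1) = A * t + B
      rw [Fin.snoc_update]; exact hAB t
    obtain ⟨f0, hf0⟩ := ih _ h0 (fun i => a i.castSucc) (fun i => b i.castSucc)
    obtain ⟨f1, hf1⟩ := ih _ h1 (fun i => a i.castSucc) (fun i => b i.castSucc)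
    refine ⟨f0 + (C (a (Fin.last m)) * X + C (b (Fin.last m))) * (f1 - f0), fun u => ?_⟩
    set g : Fin m → ℝ := fun i => a i.castSucc * u + b i.castSucc with hg
    have hvec : (fun i : Fin (m+1) => a i * u + b i)
        = Fin.snoc g (a (Fin.last m) * u + b (Fin.last m)) := by
      funext i
      induction i using Fin.lastCases with
      | last => simp [hg]
      | cast i => simp [hg]
    obtain ⟨A, B, hAB⟩ := hF (Fin.last m) (Fin.snoc g (0:ℝ))
    have key : ∀ s : ℝ, F (Fin.snoc g s) = A * s + B := by
      intro s
      have := hAB s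
      rwa [Fin.update_snoc_last] at this
    have e0 : F (Fin.snoc g 0) = B := by rw [key]; ring
    have e1 : F (Fin.snoc g 1) = A + B := by rw [key]; ring
    have estep : ∀ s : ℝ, F (Fin.snoc g s)
        = F (Fin.snoc g 0) + s * (F (Fin.snoc g 1) - F (Fin.snoc g 0)) := by
      intro s; rw [key, e0, e1]; ring
    rw [hvec, estep]
    have hF0 : F (Fin.snoc g 0) = f0.eval u := hf0 u
    have hF1 : F (Fin.snoc g 1) = f1.eval u := hf1 u
    rw [hF0, hF1]
    simp only [eval_add, eval_mul, eval_sub, eval_C, eval_X]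

/-- Derivative via blossoms: if `h` is a polynomial of degree ≤ `p` (with `p = n + 1`) and
`H` its blossom, then `h'(t) = p·(H(t,…,t,1) − H(t,…,t,0))/(1−0)`, and more generally, for
`a ≠ b`, `h'(t) = p·(H(t,…,t,b) − H(t,…,t,a))/(b−a)`, where `t` appears `p − 1` times. -/
theorem stmt16 (n : ℕ) (h : Polynomial ℝ) (hdeg : h.natDegree ≤ n + 1)
    (H : (Fin (n + 1) → ℝ) → ℝ)
    (hs : IsSymmFn H) (hma : IsMultiAffine H)
    (hdiag : ∀ t : ℝ, H (fun _ => t) = h.eval t) :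
    (∀ t : ℝ, (derivative h).eval t
        = (n + 1 : ℝ) * (H (Function.update (fun _ => t) (Fin.last n) 1)
            - H (Function.update (fun _ => t) (Fin.last n) 0)) / (1 - 0)) ∧
    (∀ t a b : ℝ, a ≠ b → (derivative h).eval t
        = (n + 1 : ℝ) * (H (Function.update (fun _ => t) (Fin.last n) b)
            - H (Function.update (fun _ => t) (Fin.last n) a)) / (b - a)) := by
  -- Main claim: h'(t) = (n+1) * (H(t,…,t,1) − H(t,…,t,0))
  have main : ∀ t : ℝ, (derivative h).eval t
      = (n + 1 : ℝ) * (H (Function.update (fun _ => t) (Fin.last n) 1)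
          - H (Function.update (fun _ => t) (Fin.last n) 0)) := by
    intro t
    -- slope functions
    set s : Fin (n+1) → ℝ → ℝ := fun k u =>
      H (Function.update (fun i : Fin (n+1) => if (i:ℕ) < (k:ℕ) then u else t) k 1)
      - H (Function.update (fun i : Fin (n+1) => if (i:ℕ) < (k:ℕ) then u else t) k 0)
      with hsdef
    -- each s k is a polynomial function
    have hpoly : ∀ k : Fin (n+1), ∃ f : Polynomial ℝ, ∀ u, s k u = f.eval u := by
      intro k
      have hupd : ∀ (v u : ℝ),
          Function.update (fun i : Fin (n+1) => if (i:ℕ) < (k:ℕ) then u else t) k v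
          = fun i : Fin (n+1) =>
              (if (i:ℕ) < (k:ℕ) then (1:ℝ) else 0) * u
              + (if i = k then v else if (i:ℕ) < (k:ℕ) then 0 else t) := by
        intro v u
        funext i
        rcases eq_or_ne i k with rfl | hik
        · simp
        · simp only [Function.update_of_ne hik, if_neg hik]
          by_cases hlt : (i:ℕ) < (k:ℕ) <;> simp [hlt]
      obtain ⟨f1, hf1⟩ := polyOfMultiAffine (n+1) H hma
        (fun i => if (i:ℕ) < (k:ℕ) then (1:ℝ) else 0)
        (fun i => if i = k then (1:ℝ) else if (i:ℕ) < (k:ℕ) then 0 else t)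
      obtain ⟨f0, hf0⟩ := polyOfMultiAffine (n+1) H hma
        (fun i => if (i:ℕ) < (k:ℕ) then (1:ℝ) else 0)
        (fun i => if i = k then (0:ℝ) else if (i:ℕ) < (k:ℕ) then 0 else t)
      refine ⟨f1 - f0, fun u => ?_⟩
      rw [hsdef]
      simp only
      rw [hupd 1 u, hupd 0 u, hf1 u, hf0 u, eval_sub]
    choose P hP using hpoly
    set Sp : Polynomial ℝ := ∑ k : Fin (n+1), P k with hSp
    have hSpeval : ∀ u, Sp.eval u = ∑ k : Fin (n+1), s k u := by
      intro u
      rw [hSp, eval_finset_sum]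
      exact Finset.sum_congr rfl fun k _ => (hP k u).symm
    -- telescoping identity
    have tele : ∀ u : ℝ, h.eval u - h.eval t = (u - t) * Sp.eval u := by
      intro u
      set Y : ℕ → ℝ := fun m => H (fun i : Fin (n+1) => if (i:ℕ) < m then u else t) with hY
      have hY0 : Y 0 = h.eval t := by
        show H (fun i : Fin (n+1) => if (i:ℕ) < 0 then u else t) = h.eval t
        simp only [Nat.not_lt_zero, if_false]
        exact hdiag t
      have hYtop : Y (n+1) = h.eval u := by
        show H (fun i : Fin (n+1) => if (i:ℕ) < n+1 then u else t) = h.eval u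
        have hv : (fun i : Fin (n+1) => if (i:ℕ) < n+1 then u else t) = fun _ => u := by
          funext i; simp [i.isLt]
        rw [hv]; exact hdiag u
      have step : ∀ k : Fin (n+1), Y ((k:ℕ)+1) - Y (k:ℕ) = (u - t) * s k u := by
        intro k
        obtain ⟨A, B, hAB⟩ := hma k (fun i : Fin (n+1) => if (i:ℕ) < (k:ℕ) then u else t)
        have hup : ∀ v : ℝ,
            Function.update (fun i : Fin (n+1) => if (i:ℕ) < (k:ℕ) then u else t) k v
            = fun i : Fin (n+1) => if i = k then v else if (i:ℕ) < (k:ℕ) then u else t := by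
          intro v; funext i
          rcases eq_or_ne i k with rfl | hik
          · simp
          · simp [Function.update_of_ne hik, hik]
        have hYk1 : Y ((k:ℕ)+1) = A * u + B := by
          have h1 := hAB u
          rw [hup u] at h1
          show H (fun i : Fin (n+1) => if (i:ℕ) < (k:ℕ)+1 then u else t) = A * u + B
          rw [← h1]
          congr 1
          funext i
          rcases eq_or_ne i k with rfl | hik
          · simp
          · have hne : (i:ℕ) ≠ (k:ℕ) := fun hc => hik (Fin.ext hc)
            have hiff : ((i:ℕ) < (k:ℕ)+1) = ((i:ℕ) < (k:ℕ)) := by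
              simp only [eq_iff_iff]; omega
            simp [hik, hiff]
        have hYk : Y (k:ℕ) = A * t + B := by
          have h2 := hAB t
          rw [hup t] at h2
          show H (fun i : Fin (n+1) => if (i:ℕ) < (k:ℕ) then u else t) = A * t + B
          rw [← h2]
          congr 1
          funext i
          rcases eq_or_ne i k with rfl | hik
          · simp
          · simp [hik]
        have hs1 : H (Function.update
            (fun i : Fin (n+1) => if (i:ℕ) < (k:ℕ) then u else t) k 1) = A * 1 + B := hAB 1
        have hs0 : H (Function.update
            (fun i : Fin (n+1) => if (i:ℕ) < (k:ℕ) then u else t) k 0) = A * 0 + B := hAB 0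
        rw [hYk1, hYk, hsdef]
        simp only
        rw [hs1, hs0]
        ring
      have sumtele : ∑ k ∈ Finset.range (n+1), (Y (k+1) - Y k) = Y (n+1) - Y 0 :=
        Finset.sum_range_sub Y (n+1)
      set sN : ℕ → ℝ := fun m => if hm : m < n+1 then s ⟨m, hm⟩ u else 0 with hsN
      have hstep' : ∑ k ∈ Finset.range (n+1), (Y (k+1) - Y k)
          = ∑ k ∈ Finset.range (n+1), (u - t) * sN k := by
        refine Finset.sum_congr rfl fun k hk => ?_
        have hk' : k < n+1 := Finset.mem_range.mp hk
        rw [hsN]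
        simp only [dif_pos hk']
        exact step ⟨k, hk'⟩
      have hSN : Sp.eval u = ∑ k ∈ Finset.range (n+1), sN k := by
        rw [hSpeval, ← Fin.sum_univ_eq_sum_range sN (n+1)]
        refine Finset.sum_congr rfl fun k _ => ?_
        rw [hsN]
        simp only [Fin.is_lt, dif_pos, Fin.eta]
      rw [← hYtop, ← hY0, ← sumtele, hstep', hSN, Finset.mul_sum]
    -- polynomial identity and derivative
    have hpolyid : h = (X - C t) * Sp + C (h.eval t) := by
      apply Polynomial.funext
      intro u
      have := tele u
      simp only [eval_add, eval_mul, eval_sub, eval_C, eval_X]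
      linarith
    have hder : (derivative h).eval t = Sp.eval t := by
      conv_lhs => rw [hpolyid]
      simp only [derivative_add, derivative_mul, derivative_sub, derivative_C,
        derivative_X, add_zero, sub_zero, zero_mul, zero_add, eval_add, eval_mul,
        eval_sub, eval_C, eval_X, one_mul, sub_self]
    -- symmetry: all slots give the same slope
    have symH : ∀ (k : Fin (n+1)) (v : ℝ),
        H (Function.update (fun _ : Fin (n+1) => t) k v)
        = H (Function.update (fun _ : Fin (n+1) => t) (Fin.last n) v) := by
      intro k v
      have hcomp : (Function.update (fun _ : Fin (n+1) => t) (Fin.last n) v)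
          ∘ (Equiv.swap k (Fin.last n))
          = Function.update (fun _ : Fin (n+1) => t) k v := by
        funext i
        simp only [Function.comp_apply]
        rcases eq_or_ne i k with rfl | hik
        · rw [Equiv.swap_apply_left, Function.update_self, Function.update_self]
        · rw [Function.update_of_ne hik]
          rcases eq_or_ne i (Fin.last n) with rfl | hil
          · rw [Equiv.swap_apply_right]
            have hkl : k ≠ Fin.last n := fun hc => hik (by rw [hc])
            rw [Function.update_of_ne hkl]
          · rw [Equiv.swap_apply_of_ne_of_ne hik hil, Function.update_of_ne hil]
      rw [← hcomp, hs (Equiv.swap k (Fin.last n))]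
    have hsk : ∀ k : Fin (n+1), s k t
        = H (Function.update (fun _ : Fin (n+1) => t) (Fin.last n) 1)
          - H (Function.update (fun _ : Fin (n+1) => t) (Fin.last n) 0) := by
      intro k
      have hconst : (fun i : Fin (n+1) => if (i:ℕ) < (k:ℕ) then t else t)
          = fun _ : Fin (n+1) => t := by funext i; split_ifs <;> rfl
      rw [hsdef]
      simp only
      rw [hconst, symH k 1, symH k 0]
    have hSpt : Sp.eval t = (n+1 : ℝ)
        * (H (Function.update (fun _ : Fin (n+1) => t) (Fin.last n) 1)
          - H (Function.update (fun _ : Fin (n+1) => t) (Fin.last n) 0)) := by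
      rw [hSpeval]
      rw [Finset.sum_congr rfl fun k _ => hsk k]
      rw [Finset.sum_const, Finset.card_univ, Fintype.card_fin]
      push_cast
      ring
    rw [hder, hSpt]
  constructor
  · intro t
    rw [main t]
    norm_num
  · intro t a b hab
    obtain ⟨A, B, hAB⟩ := hma (Fin.last n) (fun _ : Fin (n+1) => t)
    have hc : H (Function.update (fun _ : Fin (n+1) => t) (Fin.last n) 1)
        - H (Function.update (fun _ : Fin (n+1) => t) (Fin.last n) 0) = A := by
      rw [hAB 1, hAB 0]; ring
    have hd : H (Function.update (fun _ : Fin (n+1) => t) (Fin.last n) b)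
        - H (Function.update (fun _ : Fin (n+1) => t) (Fin.last n) a) = A * (b - a) := by
      rw [hAB b, hAB a]; ring
    rw [main t, hc, hd]
    have hba : b - a ≠ 0 := sub_ne_zero.mpr (Ne.symm hab)
    field_simp
end

section
/- Product of blossoms (polynomial case): let h and h₁ be polynomials of degrees ≤ p and ≤ p₁ with blossoms H and H₁, and set p̂ = p + p₁. Then the blossom Ĥ of the product h·h₁ is given by Ĥ(s₁,…,s_{p̂}) = (1/C(p̂,p)) Σ H(s_{i₁},…,s_{i_p})·H₁(s_{i_{p+1}},…,s_{i_{p̂}}), where the sum runs over all partitions of {1,…,p̂} into disjoint subsets of sizes p and p₁. -/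
open Polynomial

/-- Given a subset `A` of `{1,…,n}` of cardinality `m`, restrict an `n`-tuple `s` to the
`m`-tuple of the entries of `s` indexed by `A` (in increasing order). -/
noncomputable def restrictTuple {n m : ℕ} (A : Finset (Fin n)) (hA : A.card = m)
    (s : Fin n → ℝ) : Fin m → ℝ :=
  fun i => s (A.orderIsoOfFin hA i)

/-! Both sides are symmetric multi-affine functions of `s` with the same diagonal: on the
diagonal the right-hand side averages `C(p̂, p)` copies of `h(t) h₁(t)`. So the claim is the
uniqueness of blossoms. If a symmetric multi-affine `D` vanishes on the diagonal, interpolate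
it multi-affinely from its values at the vertices of `[0,1]ⁿ`. By symmetry a vertex value only
depends on the number `k` of ones, so along the diagonal `D` is `∑ₖ cₖ tᵏ (1 - t)ⁿ⁻ᵏ`, and the
Bernstein-type basis `tᵏ (1 - t)ⁿ⁻ᵏ` is linearly independent. -/

open Finset Function

theorem Polynomial.eq_zero_of_sum_C_mul_X_pow_mul_one_sub_X_pow_eq_zero {R : Type*} [CommRing R]
    [IsDomain R] {c : ℕ → R} {n : ℕ}
    (h : ∑ k ∈ range (n + 1), C (c k) * X ^ k * (1 - X) ^ (n - k) = 0) : ∀ k ≤ n, c k = 0 := by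
  induction n with
  | zero => intro k hk; simpa [Nat.le_zero.mp hk] using h
  | succ n ih =>
    have hsplit : ∑ k ∈ range (n + 2), C (c k) * X ^ k * (1 - X) ^ (n + 1 - k)
        = (1 - X) * ∑ k ∈ range (n + 1), C (c k) * X ^ k * (1 - X) ^ (n - k)
          + C (c (n + 1)) * X ^ (n + 1) := by
      rw [sum_range_succ, mul_sum, Nat.sub_self, pow_zero, mul_one]
      congr 1
      refine sum_congr rfl fun k hk => ?_
      rw [Nat.sub_add_comm (Nat.lt_succ_iff.mp (mem_range.mp hk))]
      ring
    rw [hsplit] at h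
    have htop : c (n + 1) = 0 := by simpa using congrArg (eval 1) h
    have hX : (1 - X : R[X]) ≠ 0 := fun h0 => by simpa using congrArg (eval 0) h0
    rw [htop, C_0, zero_mul, add_zero] at h
    intro k hk
    rcases hk.lt_or_eq with hk | rfl
    · exact ih ((mul_eq_zero.mp h).resolve_left hX) k (Nat.lt_succ_iff.mp hk)
    · exact htop

section Blossom

variable {n : ℕ} {D E : (Fin n → ℝ) → ℝ}

theorem IsMultiAffine.sub (hD : IsMultiAffine D) (hE : IsMultiAffine E) :
    IsMultiAffine (fun x => D x - E x) := by
  intro i x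
  obtain ⟨a, b, hab⟩ := hD i x
  obtain ⟨a', b', hab'⟩ := hE i x
  exact ⟨a - a', b - b', fun t => by beta_reduce; rw [hab, hab']; ring⟩

theorem IsMultiAffine.const_mul (hD : IsMultiAffine D) (c : ℝ) :
    IsMultiAffine (fun x => c * D x) := by
  intro i x
  obtain ⟨a, b, hab⟩ := hD i x
  exact ⟨c * a, c * b, fun t => by beta_reduce; rw [hab]; ring⟩

theorem IsMultiAffine.sum {ι : Type*} (s : Finset ι) {D : ι → (Fin n → ℝ) → ℝ}
    (hD : ∀ i, IsMultiAffine (D i)) : IsMultiAffine (fun x => ∑ i ∈ s, D i x) := by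
  intro j x
  choose a b hab using fun i => hD i j x
  exact ⟨∑ i ∈ s, a i, ∑ i ∈ s, b i, fun t => by simp only [hab, sum_add_distrib, sum_mul]⟩

theorem IsMultiAffine.apply_eq_interpolate (hD : IsMultiAffine D) (x : Fin n → ℝ) (j : Fin n) :
    D x = (1 - x j) * D (update x j 0) + x j * D (update x j 1) := by
  obtain ⟨a, b, hab⟩ := hD j x
  have hx := hab (x j)
  rw [update_eq_self] at hx
  rw [hx, hab, hab]
  ring

theorem IsMultiAffine.eq_sum_powerset_piecewise (hD : IsMultiAffine D) (T : Finset (Fin n))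
    (x : Fin n → ℝ) :
    D x = ∑ S ∈ T.powerset, (∏ i ∈ S, x i) * (∏ i ∈ T \ S, (1 - x i)) *
      D (S.piecewise 1 (T.piecewise 0 x)) := by
  induction T using Finset.induction_on with
  | empty => simp
  | insert j T hj ih =>
    rw [sum_powerset_insert hj, ← sum_add_distrib, ih]
    refine sum_congr rfl fun S hS => ?_
    have hjS : j ∉ S := fun h => hj (mem_powerset.mp hS h)
    set y := S.piecewise 1 (T.piecewise 0 x)
    have hyj : y j = x j := by simp [y, hjS, hj]
    have h0 : S.piecewise 1 ((insert j T).piecewise 0 x) = update y j 0 := by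
      rw [piecewise_insert, update_piecewise_of_notMem (hi := hjS), Pi.zero_apply]
    have h1 : (insert j S).piecewise 1 ((insert j T).piecewise 0 x) = update y j 1 := by
      rw [piecewise_insert, h0, update_idem, Pi.one_apply]
    rw [hD.apply_eq_interpolate y j, hyj, h0, h1, insert_sdiff_of_notMem _ hjS, insert_sdiff_insert,
      sdiff_insert_of_notMem hj, prod_insert (fun h => hj (mem_sdiff.mp h).1), prod_insert hjS]
    ring

theorem IsMultiAffine.eq_sum_powerset (hD : IsMultiAffine D) (x : Fin n → ℝ) :
    D x = ∑ S ∈ univ.powerset, (∏ i ∈ S, x i) * (∏ i ∈ Sᶜ, (1 - x i)) * D (S.piecewise 1 0) := by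
  simpa [compl_eq_univ_sdiff] using hD.eq_sum_powerset_piecewise univ x

theorem IsSymmFn.apply_piecewise_eq_of_card_eq (hD : IsSymmFn D) {S S' : Finset (Fin n)}
    (h : S.card = S'.card) : D (S.piecewise 1 0) = D (S'.piecewise 1 0) := by
  obtain ⟨σ, rfl⟩ := Equiv.Perm.exists_map_finset_eq S S' h
  have hσ : (S.map σ.toEmbedding).piecewise 1 0 ∘ σ = S.piecewise (1 : Fin n → ℝ) 0 := by
    funext i
    by_cases hi : i ∈ S <;> simp [hi, piecewise]
  rw [← hσ, hD]

theorem eq_zero_of_isSymmFn_of_isMultiAffine (hs : IsSymmFn D) (hD : IsMultiAffine D)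
    (h0 : ∀ t, D (fun _ => t) = 0) (x : Fin n → ℝ) : D x = 0 := by
  set c : ℕ → ℝ := fun k => ∑ S ∈ univ.powersetCard k, D (S.piecewise 1 0)
  have hdiag (t : ℝ) : ∑ k ∈ range (n + 1), c k * (t ^ k * (1 - t) ^ (n - k)) = 0 := by
    rw [← h0 t, hD.eq_sum_powerset, sum_powerset]
    simp only [c, sum_mul, card_univ, Fintype.card_fin]
    refine sum_congr rfl fun k _ => sum_congr rfl fun S hS => ?_
    rw [prod_const, prod_const, card_compl, Fintype.card_fin, (mem_powersetCard.mp hS).2]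
    ring
  have hc : ∀ k ≤ n, c k = 0 := by
    refine eq_zero_of_sum_C_mul_X_pow_mul_one_sub_X_pow_eq_zero (Polynomial.funext fun t => ?_)
    simpa [eval_finsetSum, mul_assoc] using hdiag t
  have hvertex (S : Finset (Fin n)) : D (S.piecewise 1 0) = 0 := by
    have hS : S.card ≤ n := by simpa using card_le_univ S
    have hsum : c S.card =
        (univ.powersetCard S.card : Finset (Finset (Fin n))).card * D (S.piecewise 1 0) := by
      rw [← nsmul_eq_mul, ← sum_const]
      exact sum_congr rfl fun S' hS' => hs.apply_piecewise_eq_of_card_eq (mem_powersetCard.mp hS').2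
    rw [hc _ hS, card_powersetCard, card_univ, Fintype.card_fin] at hsum
    exact (mul_eq_zero.mp hsum.symm).resolve_left (by exact_mod_cast (Nat.choose_pos hS).ne')
  rw [hD.eq_sum_powerset]
  exact sum_eq_zero fun S _ => by rw [hvertex, mul_zero]

theorem eq_of_isSymmFn_of_isMultiAffine (hsD : IsSymmFn D) (hD : IsMultiAffine D)
    (hsE : IsSymmFn E) (hE : IsMultiAffine E) (h : ∀ t, D (fun _ => t) = E (fun _ => t)) :
    D = E := by
  funext x
  refine sub_eq_zero.mp (eq_zero_of_isSymmFn_of_isMultiAffine (D := fun x => D x - E x) ?_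
    (hD.sub hE) (fun t => sub_eq_zero.mpr (h t)) x)
  intro σ y
  simp only [hsD σ, hsE σ]

end Blossom

section Reindexing

variable {m m' n : ℕ} {F : (Fin m → ℝ) → ℝ} {G : (Fin m' → ℝ) → ℝ} {f : Fin m → Fin n}

theorem IsSymmFn.apply_comp_eq_of_range_eq (hF : IsSymmFn F) {g : Fin m → Fin n}
    (hf : Injective f) (hg : Injective g) (hfg : Set.range f = Set.range g) (x : Fin n → ℝ) :
    F (x ∘ f) = F (x ∘ g) := by
  set τ : Equiv.Perm (Fin m) :=
    (Equiv.ofInjective f hf).trans ((Equiv.setCongr hfg).trans (Equiv.ofInjective g hg).symm)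
  have hτ : g ∘ τ = f := funext fun i => by simp [τ, Equiv.apply_ofInjective_symm]
  rw [← hτ]
  exact hF τ (x ∘ g)

theorem IsMultiAffine.comp_injective (hF : IsMultiAffine F) (hf : Injective f) :
    IsMultiAffine (fun x : Fin n → ℝ => F (x ∘ f)) := by
  intro i x
  by_cases hi : i ∈ Set.range f
  · obtain ⟨j, rfl⟩ := hi
    obtain ⟨a, b, hab⟩ := hF j (x ∘ f)
    exact ⟨a, b, fun t => by beta_reduce; rw [update_comp_eq_of_injective _ hf, hab]⟩
  · exact ⟨0, F (x ∘ f), fun t => by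
      beta_reduce; rw [update_comp_eq_of_notMem_range _ _ hi, zero_mul, zero_add]⟩

theorem IsMultiAffine.mul_comp_of_disjoint (hF : IsMultiAffine F) (hG : IsMultiAffine G)
    {g : Fin m' → Fin n} (hf : Injective f) (hg : Injective g)
    (hfg : Disjoint (Set.range f) (Set.range g)) :
    IsMultiAffine (fun x : Fin n → ℝ => F (x ∘ f) * G (x ∘ g)) := by
  intro i x
  by_cases hi : i ∈ Set.range g
  · obtain ⟨a, b, hab⟩ := hG.comp_injective hg i x
    refine ⟨F (x ∘ f) * a, F (x ∘ f) * b, fun t => ?_⟩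
    beta_reduce at hab ⊢
    rw [hab, update_comp_eq_of_notMem_range _ _ (hfg.notMem_of_mem_right hi)]
    ring
  · obtain ⟨a, b, hab⟩ := hF.comp_injective hf i x
    refine ⟨a * G (x ∘ g), b * G (x ∘ g), fun t => ?_⟩
    beta_reduce at hab ⊢
    rw [hab, update_comp_eq_of_notMem_range _ _ hi]
    ring

end Reindexing

theorem restrictTuple_eq_comp {n m : ℕ} (A : Finset (Fin n)) (hA : A.card = m) (s : Fin n → ℝ) :
    restrictTuple A hA s = s ∘ A.orderEmbOfFin hA := rfl

theorem restrictTuple_const {n m : ℕ} (A : Finset (Fin n)) (hA : A.card = m) (t : ℝ) :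
    restrictTuple A hA (fun _ => t) = fun _ => t := rfl

section ProductBlossom

variable {p p₁ : ℕ}

theorem card_compl_of_mem_powersetCard {A : Finset (Fin (p + p₁))}
    (hA : A ∈ univ.powersetCard p) : Aᶜ.card = p₁ := by
  simp [card_compl, (mem_powersetCard.mp hA).2]

noncomputable def productBlossom (H : (Fin p → ℝ) → ℝ) (H₁ : (Fin p₁ → ℝ) → ℝ)
    (s : Fin (p + p₁) → ℝ) : ℝ :=
  (1 / ((p + p₁).choose p : ℝ)) *
    ∑ A ∈ (univ.powersetCard p).attach,
      H (restrictTuple A.1 (mem_powersetCard.mp A.2).2 s) *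
      H₁ (restrictTuple A.1ᶜ (card_compl_of_mem_powersetCard A.2) s)

variable {H : (Fin p → ℝ) → ℝ} {H₁ : (Fin p₁ → ℝ) → ℝ}

theorem isMultiAffine_productBlossom (hH : IsMultiAffine H) (hH₁ : IsMultiAffine H₁) :
    IsMultiAffine (productBlossom H H₁) := by
  unfold productBlossom
  simp only [restrictTuple_eq_comp]
  refine (IsMultiAffine.sum _ fun A => ?_).const_mul _
  refine hH.mul_comp_of_disjoint hH₁ (orderEmbOfFin _ _).injective (orderEmbOfFin _ _).injective ?_
  rw [range_orderEmbOfFin, range_orderEmbOfFin, coe_compl]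
  exact disjoint_compl_right

theorem isSymmFn_productBlossom (hH : IsSymmFn H) (hH₁ : IsSymmFn H₁) :
    IsSymmFn (productBlossom H H₁) := by
  intro σ s
  unfold productBlossom
  congr 1
  refine sum_equiv (σ.finsetCongr.subtypeEquiv fun A => by simp [mem_powersetCard]) (by simp)
    fun A _ => ?_
  simp only [restrictTuple_eq_comp]
  congr 1
  · exact hH.apply_comp_eq_of_range_eq (σ.injective.comp (orderEmbOfFin _ _).injective)
      (orderEmbOfFin _ _).injective (by simp [Set.range_comp]) s
  · exact hH₁.apply_comp_eq_of_range_eq (σ.injective.comp (orderEmbOfFin _ _).injective)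
      (orderEmbOfFin _ _).injective (by simp [Set.range_comp, Equiv.image_compl]) s

theorem productBlossom_const (t : ℝ) :
    productBlossom H H₁ (fun _ => t) = H (fun _ => t) * H₁ (fun _ => t) := by
  have hC : ((p + p₁).choose p : ℝ) ≠ 0 := by
    exact_mod_cast (Nat.choose_pos (Nat.le_add_right p p₁)).ne'
  simp only [productBlossom, restrictTuple_const, sum_const, card_attach, card_powersetCard,
    card_univ, Fintype.card_fin, nsmul_eq_mul]
  field_simp

end ProductBlossom

/-- Product of blossoms: if `H, H₁, Ĥ` are the blossoms of `h`, `h₁` and of the product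
`h·h₁` (of degrees ≤ `p`, `p₁` and `p̂ = p + p₁`), then
`Ĥ(s₁,…,s_{p̂}) = (1/C(p̂,p)) Σ H(s_{i₁},…,s_{i_p})·H₁(s_{i_{p+1}},…,s_{i_{p̂}})`,
the sum running over all partitions of `{1,…,p̂}` into disjoint subsets of sizes `p`, `p₁`. -/
theorem stmt17 (p p₁ : ℕ) (h h₁ : Polynomial ℝ)
    (H : (Fin p → ℝ) → ℝ) (H₁ : (Fin p₁ → ℝ) → ℝ) (Hhat : (Fin (p + p₁) → ℝ) → ℝ)
    (hsH : IsSymmFn H) (hmaH : IsMultiAffine H)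
    (hdiagH : ∀ t : ℝ, H (fun _ => t) = h.eval t)
    (hsH₁ : IsSymmFn H₁) (hmaH₁ : IsMultiAffine H₁)
    (hdiagH₁ : ∀ t : ℝ, H₁ (fun _ => t) = h₁.eval t)
    (hsHhat : IsSymmFn Hhat) (hmaHhat : IsMultiAffine Hhat)
    (hdiagHhat : ∀ t : ℝ, Hhat (fun _ => t) = (h * h₁).eval t) :
    ∀ s : Fin (p + p₁) → ℝ,
      Hhat s = (1 / ((p + p₁).choose p : ℝ)) *
        ∑ A ∈ ((Finset.univ : Finset (Fin (p + p₁))).powersetCard p).attach,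
          H (restrictTuple A.1 (Finset.mem_powersetCard.mp A.2).2 s) *
          H₁ (restrictTuple A.1ᶜ
              (by simp [Finset.card_compl, (Finset.mem_powersetCard.mp A.2).2]) s) := by
  have hHhat : Hhat = productBlossom H H₁ :=
    eq_of_isSymmFn_of_isMultiAffine hsHhat hmaHhat (isSymmFn_productBlossom hsH hsH₁)
      (isMultiAffine_productBlossom hmaH hmaH₁) fun t => by
        rw [hdiagHhat, productBlossom_const, hdiagH, hdiagH₁, eval_mul]
  intro s
  exact congrFun hHhat s
end
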